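/- For m, n ∈ ℤ, let f_m(t) = 2 ∑_{i≥0} (λ_i/4^i) t^{2m+2i+1} ∈ ℂ((t)). Then the product f_m(t) · f_n(t) equals the Laurent polynomial t^{2m+2n+4} + 4 t^{2m+2n+2}. -/

import Mathlib

noncomputable def lam (n : ℕ) : ℂ :=
  (∏ k ∈ Finset.range n, ((1 : ℂ) / 2 - k)) / n.factorial

/-- u = 2 ∑_{i≥0} (λ_i / 4^i) t^{2i+1} ∈ ℂ((t)). -/
noncomputable def u : LaurentSeries ℂ :=
  HahnSeries.ofPowerSeries ℤ ℂ
    (PowerSeries.mk fun k => if Odd k then 2 * lam (k / 2) / 4 ^ (k / 2) else 0)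

/-- f_m = 2 ∑_{i≥0} (λ_i/4^i) t^{2m+2i+1} = t^{2m} · u ∈ ℂ((t)). -/
noncomputable def f (m : ℤ) : LaurentSeries ℂ :=
  HahnSeries.single (2 * m : ℤ) (1 : ℂ) * u

/-!
Since `λ_n = Ring.choose (1/2) n`, the series `∑ λ_n X^n` is the binomial series of `√(1 + X)`, and
Chu–Vandermonde shows that its square is `1 + X`. Rescaling and substituting `X ↦ X²` exhibits
`u = 2t · √(1 + t²/4)`, so `u² = 4t² + t⁴`, and `f_m f_n = t^{2m+2n} u²`.
-/

open PowerSeries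

lemma lam_eq_choose (n : ℕ) : lam n = Ring.choose (1 / 2 : ℂ) n := by
  rw [lam, Ring.choose_eq_smul, ← Polynomial.aeval_eq_smeval, Polynomial.aeval_def,
    ← Polynomial.eval_map, descPochhammer_map, descPochhammer_eval_eq_prod_range, smul_eq_mul,
    div_eq_inv_mul]

namespace PowerSeries

variable {R : Type*} [CommRing R] [BinomialRing R]

theorem mk_choose_mul_mk_choose (a b : R) :
    mk (Ring.choose a) * mk (Ring.choose b) = mk (Ring.choose (a + b)) := by
  ext n
  rw [coeff_mul, coeff_mk, Ring.add_choose_eq n (Commute.all a b)]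
  simp only [coeff_mk]

theorem mk_choose_one : mk (Ring.choose (1 : R)) = 1 + X := by
  ext n
  have h := Ring.choose_natCast (R := R) 1 n
  rw [Nat.cast_one] at h
  rw [coeff_mk, h]
  rcases n with _ | _ | n
  · simp
  · simp [coeff_X]
  · simp [coeff_X, Nat.choose_eq_zero_of_lt (show 1 < n + 2 by omega)]

end PowerSeries

lemma u_eq_ofPowerSeries : u = HahnSeries.ofPowerSeries ℤ ℂ
    (C 2 * X * expand 2 two_ne_zero (rescale (4⁻¹ : ℂ) (mk (Ring.choose (1 / 2 : ℂ))))) := by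
  rw [u]
  congr 1
  ext k
  rw [coeff_mk, mul_assoc, coeff_C_mul]
  rcases k with _ | k
  · simp
  · rw [coeff_succ_X_mul, coeff_expand, coeff_rescale, coeff_mk, ← lam_eq_choose]
    by_cases hk : 2 ∣ k
    · obtain ⟨j, rfl⟩ := hk
      rw [if_pos (odd_two_mul_add_one j), if_pos (dvd_mul_right 2 j),
        show (2 * j + 1) / 2 = j by omega, Nat.mul_div_cancel_left j two_pos, inv_pow]
      ring
    · have hodd : ¬ Odd (k + 1) := by
        rwa [Nat.odd_add_one, Nat.not_odd_iff_even, even_iff_two_dvd]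
      rw [if_neg hodd, if_neg hk, mul_zero]

lemma sq_u_powerSeries :
    (C 2 * X * expand 2 two_ne_zero (rescale (4⁻¹ : ℂ) (mk (Ring.choose (1 / 2 : ℂ))))) ^ 2 =
      X ^ 4 + 4 * X ^ 2 := by
  have half_sq : mk (Ring.choose (1 / 2 : ℂ)) ^ 2 = 1 + X := by
    rw [sq, mk_choose_mul_mk_choose, add_halves, mk_choose_one]
  rw [mul_pow, mul_pow, ← map_pow C, ← map_pow (expand 2 _), ← map_pow (rescale _), half_sq,
    map_add, map_one, rescale_X, map_add, map_one, map_mul, expand_C, expand_X]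
  have h : (4 : ℂ⟦X⟧) * C 4⁻¹ = 1 := by
    rw [← map_ofNat C 4, ← map_mul, mul_inv_cancel₀ (by norm_num : (4 : ℂ) ≠ 0), map_one]
  rw [show (2 : ℂ) ^ 2 = 4 by norm_num, map_ofNat]
  linear_combination X ^ 4 * h

lemma u_mul_u : u * u = HahnSeries.single 4 1 + 4 * HahnSeries.single 2 1 := by
  rw [← sq, u_eq_ofPowerSeries, ← map_pow, sq_u_powerSeries, map_add, map_mul, map_ofNat,
    HahnSeries.ofPowerSeries_X_pow, HahnSeries.ofPowerSeries_X_pow]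
  norm_num

/-- f_m · f_n = t^{2m+2n+4} + 4 t^{2m+2n+2}. -/
theorem f_mul_f (m n : ℤ) : f m * f n =
    HahnSeries.single (2 * m + 2 * n + 4 : ℤ) (1 : ℂ) +
      4 * HahnSeries.single (2 * m + 2 * n + 2 : ℤ) (1 : ℂ) := by
  have h : f m * f n = HahnSeries.single (2 * m + 2 * n) 1 * (u * u) := by
    rw [f, f, mul_mul_mul_comm, HahnSeries.single_mul_single, one_mul]
  rw [h, u_mul_u, mul_add, mul_left_comm, HahnSeries.single_mul_single,
    HahnSeries.single_mul_single, one_mul]
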